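/- arXiv:2008.07851 — 3 statements merged into one kernel-verified Lean document; each statement's English description precedes it below -/
import Mathlib

section
/- Let p > 1 be a real number and let X and Y be uniformly convex real Banach spaces. Let W := X × Y be equipped with the norm ‖w‖_W = (‖u‖_X^p + ‖v‖_Y^p)^{1/p} for w = (u, v) ∈ W. Then W is uniformly convex. -/
/-!
Let `‖w n‖, ‖w' n‖ ≤ 1` with `‖w n + w' n‖ → 2` in the `L^p` product. Along a subsequence the
norms of the components and of their sums converge. In the limit, the triangle inequality in each
factor and the midpoint convexity of `t ↦ t ^ p` can only hold with equality, and strict convexity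
then forces both `X`-components to have the same limiting norm `a`, with their sum of norm `2a`
(and likewise in `Y`). Uniform convexity of `X` and `Y`, after rescaling, makes the component
differences tend to `0`, and hence `w n - w' n → 0`.
-/

open Filter Topology
open scoped ENNReal

theorem uniformConvexSpace_iff_tendsto_norm_sub {E : Type*} [SeminormedAddCommGroup E]
    [NormedSpace ℝ E] :
    UniformConvexSpace E ↔ ∀ x y : ℕ → E, (∀ n, ‖x n‖ ≤ 1) → (∀ n, ‖y n‖ ≤ 1) →
      Tendsto (fun n => ‖x n + y n‖) atTop (𝓝 2) → Tendsto (fun n => ‖x n - y n‖) atTop (𝓝 0) := by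
  refine ⟨fun _ x y hx hy hsum => ?_, fun h => ⟨fun ε hε => ?_⟩⟩
  · refine Metric.tendsto_atTop.2 fun ε hε => ?_
    obtain ⟨δ, hδ, hball⟩ := exists_forall_closed_ball_dist_add_le_two_sub E hε
    obtain ⟨N, hN⟩ := (hsum.eventually_const_lt (sub_lt_self 2 hδ)).exists_forall_of_atTop
    refine ⟨N, fun n hn => ?_⟩
    rw [Real.dist_0_eq_abs, abs_norm]
    by_contra! hle
    exact (hN n hn).not_ge (hball (hx n) (hy n) hle)
  · by_contra! hc
    choose! x hx y hy hxy hs using hc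
    set δ : ℕ → ℝ := fun n => 1 / (n + 1)
    have hδ (n : ℕ) : 0 < δ n := Nat.one_div_pos_of_nat
    have hsum : Tendsto (fun n => ‖x (δ n) + y (δ n)‖) atTop (𝓝 2) := by
      refine tendsto_of_tendsto_of_tendsto_of_le_of_le (g := fun n => 2 - δ n) ?_
        tendsto_const_nhds (fun n => (hs _ (hδ n)).le) fun n => ?_
      · simpa [δ] using
          (tendsto_const_nhds (x := (2 : ℝ))).sub tendsto_one_div_add_atTop_nhds_zero_nat
      · exact (norm_add_le _ _).trans (by rw [hx _ (hδ n), hy _ (hδ n)]; norm_num)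
    obtain ⟨n, hn⟩ := ((h _ _ (fun n => (hx _ (hδ n)).le) (fun n => (hy _ (hδ n)).le)
      hsum).eventually_lt_const hε).exists
    exact (hxy _ (hδ n)).not_gt hn

theorem UniformConvexSpace.tendsto_norm_sub_of_tendsto_norms {E : Type*}
    [SeminormedAddCommGroup E] [NormedSpace ℝ E] [UniformConvexSpace E] {x y : ℕ → E} {a : ℝ}
    (h : Tendsto (fun n => (‖x n‖, ‖y n‖, ‖x n + y n‖)) atTop (𝓝 (a, a, 2 * a))) :
    Tendsto (fun n => ‖x n - y n‖) atTop (𝓝 0) := by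
  have hx : Tendsto (fun n => ‖x n‖) atTop (𝓝 a) := h.fst_nhds
  have hy : Tendsto (fun n => ‖y n‖) atTop (𝓝 a) := h.snd_nhds.fst_nhds
  have hxy : Tendsto (fun n => ‖x n + y n‖) atTop (𝓝 (2 * a)) := h.snd_nhds.snd_nhds
  rcases (ge_of_tendsto' hx fun n => norm_nonneg _).eq_or_lt with rfl | ha
  · exact squeeze_zero (fun n => norm_nonneg _) (fun n => norm_sub_le _ _)
      (by simpa using hx.add hy)
  set R : ℕ → ℝ := fun n => max ‖x n‖ ‖y n‖
  have hR0 (n : ℕ) : 0 ≤ R n := (norm_nonneg _).trans (le_max_left _ _)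
  have hR : Tendsto R atTop (𝓝 a) := by simpa using hx.max hy
  have hle (n : ℕ) {z : E} (hz : ‖z‖ ≤ R n) : ‖(R n)⁻¹ • z‖ ≤ 1 := by
    rw [norm_smul_of_nonneg (inv_nonneg.2 (hR0 n))]
    exact inv_mul_le_one_of_le₀ hz (hR0 n)
  have hsum : Tendsto (fun n => ‖(R n)⁻¹ • x n + (R n)⁻¹ • y n‖) atTop (𝓝 2) := by
    simp only [← smul_add, norm_smul_of_nonneg (inv_nonneg.2 (hR0 _))]
    convert (hR.inv₀ ha.ne').mul hxy using 2
    field_simp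
  have hdiff := uniformConvexSpace_iff_tendsto_norm_sub.1 ‹_› _ _
    (fun n => hle n (le_max_left _ _)) (fun n => hle n (le_max_right _ _)) hsum
  refine Tendsto.congr' ?_ (by simpa using hR.mul hdiff)
  filter_upwards [hR.eventually_const_lt ha] with n hn
  rw [← smul_sub, norm_smul_of_nonneg (inv_nonneg.2 (hR0 n)), mul_inv_cancel_left₀ hn.ne']

theorem rpow_half_le_of_le_add {q a b c : ℝ} (hq : 1 ≤ q) (ha : 0 ≤ a) (hb : 0 ≤ b)
    (hc : 0 ≤ c) (h : c ≤ a + b) : (c / 2) ^ q ≤ (a ^ q + b ^ q) / 2 := by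
  have hconv := (convexOn_rpow hq).2 ha hb one_half_pos.le one_half_pos.le (add_halves 1)
  simp only [smul_eq_mul] at hconv
  calc (c / 2) ^ q ≤ ((a + b) / 2) ^ q :=
        Real.rpow_le_rpow (by positivity) (by linarith) (by linarith)
    _ = (1 / 2 * a + 1 / 2 * b) ^ q := by ring_nf
    _ ≤ (a ^ q + b ^ q) / 2 := by linarith

theorem eq_of_rpow_add_le_rpow_half {q a b c : ℝ} (hq : 1 < q) (ha : 0 ≤ a) (hb : 0 ≤ b)
    (hc : 0 ≤ c) (h : c ≤ a + b) (h' : (a ^ q + b ^ q) / 2 ≤ (c / 2) ^ q) :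
    b = a ∧ c = 2 * a := by
  have hmid : (a ^ q + b ^ q) / 2 ≤ (1 / 2 * a + 1 / 2 * b) ^ q :=
    h'.trans (Real.rpow_le_rpow (by positivity) (by linarith) (by linarith))
  obtain rfl : b = a := by
    by_contra hne
    have hconv := (strictConvexOn_rpow hq).2 ha hb (Ne.symm hne) one_half_pos one_half_pos
      (add_halves 1)
    simp only [smul_eq_mul] at hconv
    linarith
  have : b ≤ c / 2 := by
    rwa [add_self_div_two, Real.rpow_le_rpow_iff hb (by positivity) (by linarith)] at h'
  exact ⟨rfl, by linarith⟩

theorem limit_norms_nonneg_and_le_add {E : Type*} [SeminormedAddCommGroup E] {x y : ℕ → E}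
    {a b c : ℝ} (h : Tendsto (fun n => (‖x n‖, ‖y n‖, ‖x n + y n‖)) atTop (𝓝 (a, b, c))) :
    0 ≤ a ∧ 0 ≤ b ∧ 0 ≤ c ∧ c ≤ a + b :=
  ⟨ge_of_tendsto' h.fst_nhds fun _ => norm_nonneg _,
    ge_of_tendsto' h.snd_nhds.fst_nhds fun _ => norm_nonneg _,
    ge_of_tendsto' h.snd_nhds.snd_nhds fun _ => norm_nonneg _,
    le_of_tendsto_of_tendsto' h.snd_nhds.snd_nhds (h.fst_nhds.add h.snd_nhds.fst_nhds)
      fun _ => norm_add_le _ _⟩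

theorem norm_triple_norms_le_two {E : Type*} [SeminormedAddCommGroup E] {x y : E}
    (hx : ‖x‖ ≤ 1) (hy : ‖y‖ ≤ 1) : ‖(‖x‖, ‖y‖, ‖x + y‖)‖ ≤ 2 := by
  simp only [Prod.norm_def, norm_norm, max_le_iff]
  exact ⟨by linarith, by linarith, (norm_add_le _ _).trans (by linarith)⟩

theorem WithLp.prod_norm_rpow_eq_add {p : ℝ≥0∞} {α β : Type*} [SeminormedAddCommGroup α]
    [SeminormedAddCommGroup β] (hp : 0 < p.toReal) (f : WithLp p (α × β)) :
    ‖f‖ ^ p.toReal = ‖f.fst‖ ^ p.toReal + ‖f.snd‖ ^ p.toReal := by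
  rw [prod_norm_eq_add hp, ← Real.rpow_mul (by positivity), one_div_mul_cancel hp.ne',
    Real.rpow_one]

section LpProduct

variable {X Y : Type*} [NormedAddCommGroup X] [NormedSpace ℝ X] [UniformConvexSpace X]
  [NormedAddCommGroup Y] [NormedSpace ℝ Y] [UniformConvexSpace Y] {p : ℝ≥0∞} [Fact (1 ≤ p)]

theorem WithLp.tendsto_prod_norm_sub_of_tendsto_norms (hp : 1 < p) (hp' : p ≠ ⊤)
    {w w' : ℕ → WithLp p (X × Y)} (hw : ∀ n, ‖w n‖ ≤ 1) (hw' : ∀ n, ‖w' n‖ ≤ 1)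
    (hsum : Tendsto (fun n => ‖w n + w' n‖) atTop (𝓝 2)) {A A' C B B' D : ℝ}
    (hX : Tendsto (fun n => (‖(w n).fst‖, ‖(w' n).fst‖, ‖(w n).fst + (w' n).fst‖)) atTop
      (𝓝 (A, A', C)))
    (hY : Tendsto (fun n => (‖(w n).snd‖, ‖(w' n).snd‖, ‖(w n).snd + (w' n).snd‖)) atTop
      (𝓝 (B, B', D))) :
    Tendsto (fun n => ‖w n - w' n‖) atTop (𝓝 0) := by
  have hq : 1 < p.toReal := by
    simpa using (ENNReal.toReal_lt_toReal ENNReal.one_ne_top hp').2 hp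
  set q := p.toReal
  have hq0 : 0 < q := by linarith
  obtain ⟨hA, hA', hC, hCA⟩ := limit_norms_nonneg_and_le_add hX
  obtain ⟨hB, hB', hD, hDB⟩ := limit_norms_nonneg_and_le_add hY
  have hunit {v : ℕ → WithLp p (X × Y)} {a b : ℝ} (hv : ∀ n, ‖v n‖ ≤ 1)
      (ha : Tendsto (fun n => ‖(v n).fst‖) atTop (𝓝 a))
      (hb : Tendsto (fun n => ‖(v n).snd‖) atTop (𝓝 b)) : a ^ q + b ^ q ≤ 1 :=
    le_of_tendsto' ((ha.rpow_const (.inr hq0.le)).add (hb.rpow_const (.inr hq0.le))) fun n => by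
      rw [← WithLp.prod_norm_rpow_eq_add hq0]
      exact Real.rpow_le_one (norm_nonneg _) (hv n) hq0.le
  have hAB := hunit hw hX.fst_nhds hY.fst_nhds
  have hAB' := hunit hw' hX.snd_nhds.fst_nhds hY.snd_nhds.fst_nhds
  have hCD : C ^ q + D ^ q = 2 ^ q := by
    refine tendsto_nhds_unique ((hX.snd_nhds.snd_nhds.rpow_const (.inr hq0.le)).add
      (hY.snd_nhds.snd_nhds.rpow_const (.inr hq0.le))) ((hsum.rpow_const (.inr hq0.le)).congr ?_)
    intro n
    rw [WithLp.prod_norm_rpow_eq_add hq0, WithLp.add_fst, WithLp.add_snd]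
  have hCD' : (C / 2) ^ q + (D / 2) ^ q = 1 := by
    rw [Real.div_rpow hC zero_le_two, Real.div_rpow hD zero_le_two, ← add_div, hCD,
      div_self (by positivity)]
  have hXmid := rpow_half_le_of_le_add hq.le hA hA' hC hCA
  have hYmid := rpow_half_le_of_le_add hq.le hB hB' hD hDB
  -- `1 = (C/2)^q + (D/2)^q ≤ (A^q + A'^q)/2 + (B^q + B'^q)/2 ≤ 1` forces equality in both
  obtain ⟨rfl, rfl⟩ := eq_of_rpow_add_le_rpow_half hq hA hA' hC hCA (by linarith)
  obtain ⟨rfl, rfl⟩ := eq_of_rpow_add_le_rpow_half hq hB hB' hD hDB (by linarith)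
  have hdiff : Tendsto (fun n => w n - w' n) atTop (𝓝 (WithLp.toLp p (0, 0))) :=
    ((WithLp.prod_continuous_toLp p X Y).tendsto _).comp
      ((tendsto_zero_iff_norm_tendsto_zero.2
        (UniformConvexSpace.tendsto_norm_sub_of_tendsto_norms hX)).prodMk_nhds
      (tendsto_zero_iff_norm_tendsto_zero.2
        (UniformConvexSpace.tendsto_norm_sub_of_tendsto_norms hY)))
  simpa using tendsto_zero_iff_norm_tendsto_zero.1 hdiff

theorem WithLp.exists_subseq_tendsto_prod_norm_sub (hp : 1 < p) (hp' : p ≠ ⊤)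
    {w w' : ℕ → WithLp p (X × Y)} (hw : ∀ n, ‖w n‖ ≤ 1) (hw' : ∀ n, ‖w' n‖ ≤ 1)
    (hsum : Tendsto (fun n => ‖w n + w' n‖) atTop (𝓝 2)) :
    ∃ φ : ℕ → ℕ, Tendsto (fun n => ‖w (φ n) - w' (φ n)‖) atTop (𝓝 0) := by
  obtain ⟨_, -, φ, hφ, hlim⟩ := tendsto_subseq_of_bounded Metric.isBounded_closedBall
    (x := fun n => ((‖(w n).fst‖, ‖(w' n).fst‖, ‖(w n).fst + (w' n).fst‖),
      (‖(w n).snd‖, ‖(w' n).snd‖, ‖(w n).snd + (w' n).snd‖)))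
    fun n => mem_closedBall_zero_iff.2 <| by
      rw [Prod.norm_def]
      exact max_le
        (norm_triple_norms_le_two ((w n).norm_fst_le.trans (hw n))
          ((w' n).norm_fst_le.trans (hw' n)))
        (norm_triple_norms_le_two ((w n).norm_snd_le.trans (hw n))
          ((w' n).norm_snd_le.trans (hw' n)))
  exact ⟨φ, tendsto_prod_norm_sub_of_tendsto_norms hp hp' (fun n => hw _) (fun n => hw' _)
    (hsum.comp hφ.tendsto_atTop) hlim.fst_nhds hlim.snd_nhds⟩

end LpProduct

theorem stmt_11_general {X Y : Type*} [NormedAddCommGroup X] [NormedSpace ℝ X]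
    [NormedAddCommGroup Y] [NormedSpace ℝ Y]
    [UniformConvexSpace X] [UniformConvexSpace Y]
    (p : ℝ≥0∞) [Fact (1 ≤ p)] (hp : 1 < p) (hp' : p ≠ ⊤) :
    UniformConvexSpace (WithLp p (X × Y)) :=
  uniformConvexSpace_iff_tendsto_norm_sub.2 fun w w' hw hw' hsum =>
    tendsto_of_subseq_tendsto fun ns hns =>
      WithLp.exists_subseq_tendsto_prod_norm_sub (w := w ∘ ns) (w' := w' ∘ ns) hp hp'
        (fun n => hw (ns n)) (fun n => hw' (ns n)) (hsum.comp hns)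

/-- If `X` and `Y` are uniformly convex real Banach spaces and `p > 1` is finite,
then `W = X × Y` endowed with the norm `‖(u, v)‖_W = (‖u‖_X^p + ‖v‖_Y^p)^{1/p}`
(the `L^p` product, `WithLp p (X × Y)`) is uniformly convex. -/
theorem stmt_11 {X Y : Type*} [NormedAddCommGroup X] [NormedSpace ℝ X] [CompleteSpace X]
    [NormedAddCommGroup Y] [NormedSpace ℝ Y] [CompleteSpace Y]
    [UniformConvexSpace X] [UniformConvexSpace Y]
    (p : ℝ≥0∞) [Fact (1 ≤ p)] (hp : 1 < p) (hp' : p ≠ ⊤) :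
    UniformConvexSpace (WithLp p (X × Y)) :=
  stmt_11_general p hp hp'
end

section
/- Let E be a real uniformly convex Banach space, p > 1 a real number, and r > 0; set B_r(0) := {x ∈ E : ‖x‖ ≤ r}. Then there exists a continuous, strictly increasing, convex function g : [0,∞) → [0,∞) with g(0) = 0 such that for every x, y ∈ B_r(0) and every j_p(x) ∈ J_p(x), j_p(y) ∈ J_p(y): (i) ‖x + y‖^p ≥ ‖x‖^p + p⟨j_p(x), y⟩ + g(‖y‖); (ii) ⟨j_p(x) − j_p(y), x − y⟩ ≥ g(‖x − y‖). -/
/-! For `f ∈ J_p x` the Bregman distance `D(x, u) = ‖u‖ ^ p - ‖x‖ ^ p - p ⟨f, u - x⟩` of `‖·‖ ^ p`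
is nonnegative, and the two inequalities read `D(x, x + y) ≥ g ‖y‖` and
`D(x, y) + D(y, x) = p ⟨j_p x - j_p y, x - y⟩ ≥ p g ‖x - y‖`.
Uniform convexity gives `‖x + u‖ ≤ (2 - δ) max ‖x‖ ‖u‖` for separated points, which bounds
`D(x, u)` below by a continuous function of `(‖x‖, ‖u‖)` that is positive away from the origin;
by compactness `D` is bounded away from `0` on separated pairs of a ball. Hence the infimum
`h t` of `D` over pairs of the `2r`-ball at distance `≥ t` is monotone and positive for `t > 0`,
and `g t = ∫₀ᵗ h / (2 r p)` is convex (its density is monotone), strictly increasing, and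
below `h / p` on `[0, 2r]`. -/

open Set MeasureTheory

section Primitive

variable {w : ℝ → ℝ}

theorem Monotone.integral_le_sub_mul (hw : Monotone w) {a b : ℝ} (hab : a ≤ b) :
    ∫ s in a..b, w s ≤ (b - a) * w b := by
  simpa using intervalIntegral.integral_mono_on hab (hw.intervalIntegrable (μ := volume))
    intervalIntegrable_const fun s hs => hw hs.2

theorem Monotone.sub_mul_le_integral (hw : Monotone w) {a b : ℝ} (hab : a ≤ b) :
    (b - a) * w a ≤ ∫ s in a..b, w s := by
  simpa using intervalIntegral.integral_mono_on hab intervalIntegrable_const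
    (hw.intervalIntegrable (μ := volume)) fun s hs => hw hs.1

theorem Monotone.integral_sub_integral (hw : Monotone w) (a x y : ℝ) :
    (∫ s in a..y, w s) - ∫ s in a..x, w s = ∫ s in x..y, w s :=
  intervalIntegral.integral_interval_sub_left hw.intervalIntegrable hw.intervalIntegrable

theorem Monotone.convexOn_primitive (hw : Monotone w) (a : ℝ) :
    ConvexOn ℝ univ fun t => ∫ s in a..t, w s := by
  refine convexOn_of_slope_mono_adjacent convex_univ fun {x y z} _ _ hxy hyz => ?_
  simp only [hw.integral_sub_integral]
  calc (∫ s in x..y, w s) / (y - x) ≤ w y := by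
        rw [div_le_iff₀ (sub_pos.2 hxy), mul_comm]; exact hw.integral_le_sub_mul hxy.le
    _ ≤ (∫ s in y..z, w s) / (z - y) := by
        rw [le_div_iff₀ (sub_pos.2 hyz), mul_comm]; exact hw.sub_mul_le_integral hyz.le

theorem Monotone.strictMonoOn_primitive (hw : Monotone w) {a : ℝ} (hpos : ∀ s, a < s → 0 < w s) :
    StrictMonoOn (fun t => ∫ s in a..t, w s) (Ici a) := by
  intro x hx y _ hxy
  have := intervalIntegral.intervalIntegral_pos_of_pos_on hw.intervalIntegrable
    (fun s hs => hpos s (lt_of_le_of_lt hx hs.1)) hxy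
  linarith [hw.integral_sub_integral a x y]

theorem exists_convexOn_strictMonoOn_le {h : ℝ → ℝ} (hmono : Monotone h) (h0 : 0 ≤ h 0)
    (hpos : ∀ t, 0 < t → 0 < h t) {T : ℝ} (hT : 0 < T) :
    ∃ g : ℝ → ℝ, ContinuousOn g (Ici 0) ∧ StrictMonoOn g (Ici 0) ∧ ConvexOn ℝ (Ici 0) g ∧
      (∀ t, 0 ≤ t → 0 ≤ g t) ∧ g 0 = 0 ∧ ∀ t ∈ Icc 0 T, g t ≤ h t := by
  have hw : Monotone fun s => h s / T := hmono.div_const hT.le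
  have hw_nonneg : ∀ s, 0 ≤ s → 0 ≤ h s / T := fun s hs => div_nonneg (h0.trans (hmono hs)) hT.le
  refine ⟨fun t => ∫ s in (0 : ℝ)..t, h s / T,
    (intervalIntegral.continuous_primitive (fun _ _ => hw.intervalIntegrable) 0).continuousOn,
    hw.strictMonoOn_primitive fun s hs => div_pos (hpos s hs) hT,
    (hw.convexOn_primitive 0).subset (subset_univ _) (convex_Ici 0),
    fun t ht => intervalIntegral.integral_nonneg ht fun s hs => hw_nonneg s hs.1,
    intervalIntegral.integral_same, fun t ht => ?_⟩
  calc ∫ s in (0 : ℝ)..t, h s / T ≤ (t - 0) * (h t / T) := hw.integral_le_sub_mul ht.1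
    _ ≤ T * (h t / T) := by gcongr; exacts [hw_nonneg t ht.1, by linarith [ht.2]]
    _ = h t := mul_div_cancel₀ _ hT.ne'

end Primitive

theorem Real.mul_rpow_sub_one {p a : ℝ} (hp : p ≠ 0) (ha : 0 ≤ a) : a * a ^ (p - 1) = a ^ p := by
  rw [← Real.rpow_one_add' ha (by simpa using hp), add_sub_cancel]

theorem Real.rpow_add_mul_sub_lt_rpow {p a b : ℝ} (hp : 1 < p) (ha : 0 ≤ a) (hb : 0 ≤ b)
    (hab : a ≠ b) : a ^ p + p * a ^ (p - 1) * (b - a) < b ^ p := by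
  have hderiv : HasDerivAt (fun t : ℝ => t ^ p) (p * a ^ (p - 1)) a :=
    Real.hasDerivAt_rpow_const (Or.inr hp.le)
  rcases hab.lt_or_gt with hlt | hlt
  · have := (strictConvexOn_rpow hp).lt_slope_of_hasDerivAt ha hb hlt hderiv
    rw [slope_def_field, lt_div_iff₀ (sub_pos.2 hlt)] at this
    linarith
  · have := (strictConvexOn_rpow hp).slope_lt_of_hasDerivAt hb ha hlt hderiv
    rw [slope_def_field, div_lt_iff₀ (sub_pos.2 hlt)] at this
    linarith

theorem Real.rpow_add_mul_sub_le_rpow {p a b : ℝ} (hp : 1 < p) (ha : 0 ≤ a) (hb : 0 ≤ b) :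
    a ^ p + p * a ^ (p - 1) * (b - a) ≤ b ^ p := by
  rcases eq_or_ne a b with rfl | hab
  · simp
  · exact (Real.rpow_add_mul_sub_lt_rpow hp ha hb hab).le

section DualityMap

variable {E : Type*} [NormedAddCommGroup E] [NormedSpace ℝ E] {p : ℝ} {x : E}
  {f : StrongDual ℝ E}

def dualityMap (p : ℝ) (x : E) : Set (StrongDual ℝ E) :=
  {f | f x = ‖x‖ * ‖f‖ ∧ ‖f‖ = ‖x‖ ^ (p - 1)}

/-- The Bregman distance of `‖·‖ ^ p` from `x` to `u`, where `p • f` with `f ∈ dualityMap p x`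
plays the role of the gradient of `‖·‖ ^ p` at `x`. -/
noncomputable def bregmanDist (p : ℝ) (f : StrongDual ℝ E) (x u : E) : ℝ :=
  ‖u‖ ^ p - ‖x‖ ^ p - p * f (u - x)

theorem apply_self_of_mem_dualityMap (hp : p ≠ 0) (hf : f ∈ dualityMap p x) :
    f x = ‖x‖ ^ p := by
  rw [hf.1, hf.2, Real.mul_rpow_sub_one hp (norm_nonneg x)]

theorem apply_le_of_mem_dualityMap (hf : f ∈ dualityMap p x) (u : E) :
    f u ≤ ‖x‖ ^ (p - 1) * ‖u‖ :=
  hf.2 ▸ (le_abs_self _).trans (f.le_opNorm u)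

theorem bregmanDist_nonneg (hp : 1 < p) (hf : f ∈ dualityMap p x) (u : E) :
    0 ≤ bregmanDist p f x u := by
  have hfu := mul_le_mul_of_nonneg_left (apply_le_of_mem_dualityMap hf u) (by linarith : 0 ≤ p)
  have := Real.rpow_add_mul_sub_le_rpow hp (norm_nonneg x) (norm_nonneg u)
  rw [bregmanDist, map_sub, apply_self_of_mem_dualityMap (by linarith) hf]
  nlinarith [Real.mul_rpow_sub_one (by linarith : p ≠ 0) (norm_nonneg x)]

theorem bregmanDist_add_bregmanDist (p : ℝ) (f f' : StrongDual ℝ E) (x y : E) :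
    bregmanDist p f x y + bregmanDist p f' y x = p * (f - f') (x - y) := by
  simp only [bregmanDist, sub_apply, map_sub]
  ring

theorem exists_norm_add_le_two_sub_mul_max [UniformConvexSpace E] {ε : ℝ} (hε : 0 < ε) :
    ∃ δ > 0, ∀ x y : E, ε * max ‖x‖ ‖y‖ ≤ ‖x - y‖ → ‖x + y‖ ≤ (2 - δ) * max ‖x‖ ‖y‖ := by
  obtain ⟨δ, hδ, hconv⟩ := exists_forall_closed_ball_dist_add_le_two_sub E hε
  refine ⟨δ, hδ, fun x y hxy => ?_⟩
  set m := max ‖x‖ ‖y‖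
  have hxm : ‖x‖ ≤ m := le_max_left _ _
  have hym : ‖y‖ ≤ m := le_max_right _ _
  rcases (hxm.trans' (norm_nonneg x)).eq_or_lt with hm | hm
  · have := norm_add_le_of_le hxm hym
    rw [← hm] at this ⊢
    linarith
  have hscale : ∀ z : E, ‖m⁻¹ • z‖ = m⁻¹ * ‖z‖ := norm_smul_of_nonneg (inv_nonneg.2 hm.le)
  have := hconv (x := m⁻¹ • x) (y := m⁻¹ • y)
    (by rw [hscale, inv_mul_le_iff₀ hm, mul_one]; exact hxm)
    (by rw [hscale, inv_mul_le_iff₀ hm, mul_one]; exact hym)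
    (by rw [← smul_sub, hscale, le_inv_mul_iff₀ hm, mul_comm]; exact hxy)
  rwa [← smul_add, hscale, inv_mul_le_iff₀ hm, mul_comm] at this

/-- The scalar Bregman distance of `t ↦ t ^ p`, plus the gain from
`‖x + u‖ ≤ (2 - δ) * max ‖x‖ ‖u‖`; here `q = (‖x‖, ‖u‖)`. -/
noncomputable def bregmanMinorant (p δ : ℝ) (q : ℝ × ℝ) : ℝ :=
  q.2 ^ p - q.1 ^ p - p * q.1 ^ (p - 1) * (q.2 - q.1)
    + p * q.1 ^ (p - 1) * max 0 (q.1 + q.2 - (2 - δ) * max q.1 q.2)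

theorem continuous_bregmanMinorant (hp : 1 < p) (δ : ℝ) : Continuous (bregmanMinorant p δ) := by
  have h₁ := Real.continuous_rpow_const (by linarith : 0 ≤ p)
  have h₂ := Real.continuous_rpow_const (by linarith : 0 ≤ p - 1)
  unfold bregmanMinorant
  fun_prop

theorem bregmanMinorant_pos (hp : 1 < p) {δ a b : ℝ} (hδ : 0 < δ) (ha : 0 ≤ a) (hb : 0 ≤ b)
    (hab : 0 < max a b) : 0 < bregmanMinorant p δ (a, b) := by
  have hterm : 0 ≤ p * a ^ (p - 1) * max 0 (a + b - (2 - δ) * max a b) := by positivity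
  rcases eq_or_ne a b with rfl | hne
  · rw [max_self] at hab
    have : a + a - (2 - δ) * max a a = δ * a := by rw [max_self]; ring
    simp only [bregmanMinorant, this, max_eq_right (by positivity : 0 ≤ δ * a)]
    have : 0 < a ^ (p - 1) := Real.rpow_pos_of_pos hab _
    simp only [sub_self, mul_zero, zero_add]
    positivity
  · have := Real.rpow_add_mul_sub_lt_rpow hp ha hb hne
    simp only [bregmanMinorant]
    linarith

theorem bregmanMinorant_le_bregmanDist (hp : 0 < p) {δ : ℝ} (hf : f ∈ dualityMap p x) {u : E}
    (hxu : ‖x + u‖ ≤ (2 - δ) * max ‖x‖ ‖u‖) :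
    bregmanMinorant p δ (‖x‖, ‖u‖) ≤ bregmanDist p f x u := by
  have hsum : ‖x + u‖ ≤ ‖x‖ + ‖u‖ - max 0 (‖x‖ + ‖u‖ - (2 - δ) * max ‖x‖ ‖u‖) := by
    rcases le_total (‖x‖ + ‖u‖ - (2 - δ) * max ‖x‖ ‖u‖) 0 with h | h
    · rw [max_eq_left h, sub_zero]; exact norm_add_le x u
    · rw [max_eq_right h]; linarith
  have hfu : f u ≤ ‖x‖ ^ (p - 1) * ‖x + u‖ - ‖x‖ ^ p := by
    have := apply_le_of_mem_dualityMap hf (x + u)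
    rw [map_add, apply_self_of_mem_dualityMap hp.ne' hf] at this
    linarith
  have hp' : 0 ≤ p * ‖x‖ ^ (p - 1) := by positivity
  have := mul_le_mul_of_nonneg_left hsum hp'
  simp only [bregmanMinorant, bregmanDist, map_sub, apply_self_of_mem_dualityMap hp.ne' hf]
  nlinarith [Real.mul_rpow_sub_one hp.ne' (norm_nonneg x)]

theorem exists_pos_le_bregmanDist [UniformConvexSpace E] (hp : 1 < p) (R : ℝ) {ε : ℝ}
    (hε : 0 < ε) : ∃ c > 0, ∀ x u : E, ∀ f ∈ dualityMap p x, ‖x‖ ≤ R → ‖u‖ ≤ R →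
      ε ≤ ‖x - u‖ → c ≤ bregmanDist p f x u := by
  rcases le_or_gt R 0 with hR | hR
  · refine ⟨1, one_pos, fun x u f _ hx hu hxu => absurd hε (not_lt.2 ?_)⟩
    linarith [norm_sub_le x u]
  obtain ⟨δ, hδ, hconv⟩ := exists_norm_add_le_two_sub_mul_max (E := E) (div_pos hε hR)
  set K : Set (ℝ × ℝ) := Icc 0 R ×ˢ Icc 0 R ∩ {q | ε / 2 ≤ max q.1 q.2}
  have hK : IsCompact K := (isCompact_Icc.prod isCompact_Icc).inter_right
    (isClosed_le continuous_const (continuous_fst.max continuous_snd))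
  obtain ⟨c, hc, hcK⟩ := hK.exists_forall_le' (continuous_bregmanMinorant hp δ).continuousOn
    fun q ⟨⟨⟨ha, _⟩, hb, _⟩, hq⟩ => bregmanMinorant_pos hp hδ ha hb ((half_pos hε).trans_le hq)
  refine ⟨c, hc, fun x u f hf hx hu hxu => ?_⟩
  have hmax : ε ≤ 2 * max ‖x‖ ‖u‖ := by
    linarith [norm_sub_le x u, le_max_left ‖x‖ ‖u‖, le_max_right ‖x‖ ‖u‖]
  have hdist : ε / R * max ‖x‖ ‖u‖ ≤ ‖x - u‖ :=
    le_trans (by rw [div_mul_eq_mul_div, div_le_iff₀ hR]; gcongr; exact max_le hx hu) hxu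
  exact (hcK _ ⟨⟨⟨norm_nonneg x, hx⟩, norm_nonneg u, hu⟩, show ε / 2 ≤ _ by linarith⟩).trans
    (bregmanMinorant_le_bregmanDist (by linarith) hf (hconv x u hdist))

variable (E) in
def bregmanDistSet (p R t : ℝ) : Set ℝ :=
  {d | ∃ x u : E, ∃ f ∈ dualityMap p x,
    ‖x‖ ≤ R ∧ ‖u‖ ≤ R ∧ t ≤ ‖x - u‖ ∧ bregmanDist p f x u = d}

variable (E) in
/-- The inserted `1` keeps the infimum away from the junk value `sInf ∅ = 0`. -/
noncomputable def bregmanModulus (p R t : ℝ) : ℝ :=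
  sInf (insert 1 (bregmanDistSet E p R t))

theorem bddBelow_insert_bregmanDistSet (hp : 1 < p) (R t : ℝ) :
    BddBelow (insert 1 (bregmanDistSet E p R t)) := by
  refine ⟨0, forall_mem_insert.2 ⟨zero_le_one, ?_⟩⟩
  rintro _ ⟨x, u, f, hf, -, -, -, rfl⟩
  exact bregmanDist_nonneg hp hf u

theorem bregmanModulus_nonneg (hp : 1 < p) (R t : ℝ) : 0 ≤ bregmanModulus E p R t := by
  refine le_csInf (insert_nonempty _ _) (forall_mem_insert.2 ⟨zero_le_one, ?_⟩)
  rintro _ ⟨x, u, f, hf, -, -, -, rfl⟩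
  exact bregmanDist_nonneg hp hf u

theorem monotone_bregmanModulus (hp : 1 < p) (R : ℝ) : Monotone (bregmanModulus E p R) := by
  refine fun t₁ t₂ ht => csInf_le_csInf (bddBelow_insert_bregmanDistSet hp R t₁)
    (insert_nonempty _ _) (insert_subset_insert ?_)
  rintro _ ⟨x, u, f, hf, hx, hu, hxu, rfl⟩
  exact ⟨x, u, f, hf, hx, hu, ht.trans hxu, rfl⟩

theorem bregmanModulus_pos [UniformConvexSpace E] (hp : 1 < p) (R : ℝ) {t : ℝ} (ht : 0 < t) :
    0 < bregmanModulus E p R t := by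
  obtain ⟨c, hc, hle⟩ := exists_pos_le_bregmanDist (E := E) hp R ht
  refine (lt_min one_pos hc).trans_le
    (le_csInf (insert_nonempty _ _) (forall_mem_insert.2 ⟨min_le_left _ _, ?_⟩))
  rintro _ ⟨x, u, f, hf, hx, hu, hxu, rfl⟩
  exact (min_le_right _ _).trans (hle x u f hf hx hu hxu)

theorem bregmanModulus_le_bregmanDist (hp : 1 < p) {R : ℝ} (hf : f ∈ dualityMap p x) {u : E}
    (hx : ‖x‖ ≤ R) (hu : ‖u‖ ≤ R) : bregmanModulus E p R ‖x - u‖ ≤ bregmanDist p f x u :=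
  csInf_le (bddBelow_insert_bregmanDistSet hp R _)
    (mem_insert_of_mem _ ⟨x, u, f, hf, hx, hu, le_rfl, rfl⟩)

end DualityMap

theorem stmt_13_general {E : Type*} [NormedAddCommGroup E] [NormedSpace ℝ E]
    [UniformConvexSpace E]
    (p : ℝ) (hp : 1 < p) (r : ℝ) (hr : 0 < r) :
    ∃ g : ℝ → ℝ,
      ContinuousOn g (Set.Ici 0) ∧
      StrictMonoOn g (Set.Ici 0) ∧
      ConvexOn ℝ (Set.Ici 0) g ∧
      (∀ t : ℝ, 0 ≤ t → 0 ≤ g t) ∧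
      g 0 = 0 ∧
      ∀ x y : E, ‖x‖ ≤ r → ‖y‖ ≤ r →
        ∀ jx ∈ {f : StrongDual ℝ E | f x = ‖x‖ * ‖f‖ ∧ ‖f‖ = ‖x‖ ^ (p - 1)},
        ∀ jy ∈ {f : StrongDual ℝ E | f y = ‖y‖ * ‖f‖ ∧ ‖f‖ = ‖y‖ ^ (p - 1)},
          ‖x + y‖ ^ p ≥ ‖x‖ ^ p + p * jx y + g ‖y‖ ∧
          (jx - jy) (x - y) ≥ g ‖x - y‖ := by
  have hp₀ : 0 < p := by linarith
  have hh : ∀ t, 0 ≤ bregmanModulus E p (2 * r) t := bregmanModulus_nonneg hp _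
  obtain ⟨g, hg_cont, hg_mono, hg_conv, hg_nonneg, hg_zero, hg_le⟩ :=
    exists_convexOn_strictMonoOn_le ((monotone_bregmanModulus hp _).div_const hp₀.le)
      (div_nonneg (hh 0) hp₀.le) (fun t ht => div_pos (bregmanModulus_pos hp _ ht) hp₀)
      (by linarith : 0 < 2 * r)
  refine ⟨g, hg_cont, hg_mono, hg_conv, hg_nonneg, hg_zero,
    fun x y hx hy jx hjx jy hjy => ⟨?_, ?_⟩⟩
  · have hD := bregmanModulus_le_bregmanDist hp (R := 2 * r) hjx (u := x + y) (by linarith)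
      ((norm_add_le_of_le hx hy).trans_eq (two_mul r).symm)
    rw [show x - (x + y) = -y by abel, norm_neg, bregmanDist, add_sub_cancel_left] at hD
    have hg := hg_le ‖y‖ ⟨norm_nonneg y, by linarith⟩
    linarith [div_le_self (hh ‖y‖) hp.le]
  · have hD := bregmanModulus_le_bregmanDist hp (R := 2 * r) hjx (u := y)
      (by linarith) (by linarith)
    have hg := hg_le ‖x - y‖ ⟨norm_nonneg _, (norm_sub_le_of_le hx hy).trans_eq (two_mul r).symm⟩
    rw [le_div_iff₀ hp₀] at hg
    refine le_of_mul_le_mul_left ?_ hp₀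
    linarith [bregmanDist_add_bregmanDist p jx jy x y, bregmanDist_nonneg hp hjy x]

/-- Xu's inequalities: in a real uniformly convex Banach space `E`, for `r > 0`
there is a continuous strictly increasing convex function `g : [0,∞) → [0,∞)` with
`g 0 = 0` such that for all `x, y` in the closed ball `B_r(0)` and all selections
`j_p x ∈ J_p x`, `j_p y ∈ J_p y` of the generalized duality mapping:
(i) `‖x + y‖^p ≥ ‖x‖^p + p ⟨j_p x, y⟩ + g ‖y‖` and
(ii) `⟨j_p x - j_p y, x - y⟩ ≥ g ‖x - y‖`. -/
theorem stmt_13 {E : Type*} [NormedAddCommGroup E] [NormedSpace ℝ E] [CompleteSpace E]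
    [UniformConvexSpace E]
    (p : ℝ) (hp : 1 < p) (r : ℝ) (hr : 0 < r) :
    ∃ g : ℝ → ℝ,
      ContinuousOn g (Set.Ici 0) ∧
      StrictMonoOn g (Set.Ici 0) ∧
      ConvexOn ℝ (Set.Ici 0) g ∧
      (∀ t : ℝ, 0 ≤ t → 0 ≤ g t) ∧
      g 0 = 0 ∧
      ∀ x y : E, ‖x‖ ≤ r → ‖y‖ ≤ r →
        ∀ jx ∈ {f : StrongDual ℝ E | f x = ‖x‖ * ‖f‖ ∧ ‖f‖ = ‖x‖ ^ (p - 1)},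
        ∀ jy ∈ {f : StrongDual ℝ E | f y = ‖y‖ * ‖f‖ ∧ ‖f‖ = ‖y‖ ^ (p - 1)},
          ‖x + y‖ ^ p ≥ ‖x‖ ^ p + p * jx y + g ‖y‖ ∧
          (jx - jy) (x - y) ≥ g ‖x - y‖ :=
  stmt_13_general p hp r hr
end

section
/- Let E be a smooth uniformly convex real Banach space with normalized duality mapping J : E → E* satisfying ⟨J x, x⟩ = ‖x‖² and ‖J x‖ = ‖x‖ for all x ∈ E, and define φ(x, y) := ‖x‖² − 2⟨J y, x⟩ + ‖y‖². Let {x_n} and {y_n} be two sequences in E. If either {x_n} or {y_n} is bounded and φ(x_n, y_n) → 0 as n → ∞, then ‖x_n − y_n‖ → 0 as n → ∞. -/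
/-!
Since `⟨J y, x⟩ ≤ ‖y‖ ‖x‖`, we have `(‖x‖ - ‖y‖)² ≤ φ(x, y)` and, testing `J y` on `x + y`,
`2 ‖y‖ (‖x‖ + ‖y‖ - ‖x + y‖) ≤ φ(x, y)`. Hence `φ(x_n, y_n) → 0` makes both sequences bounded
and the norms nearly equal. If `‖x_n - y_n‖ ≥ ε`, uniform convexity (on a ball
containing both sequences) makes the triangle defect `‖x_n‖ + ‖y_n‖ - ‖x_n + y_n‖` bounded below,
and `‖y_n‖ ≥ ε / 4`, contradicting the second inequality.
-/

open Filter

/-- Rescaling the unit-ball modulus by `max ‖x‖ ‖y‖`, which is at least `ε / 2`. -/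
theorem exists_forall_norm_add_le_two_mul_max_sub {E : Type*} [NormedAddCommGroup E]
    [NormedSpace ℝ E] [UniformConvexSpace E] {ε M : ℝ} (hε : 0 < ε) (hM : 0 < M) :
    ∃ δ > 0, ∀ ⦃x y : E⦄, ‖x‖ ≤ M → ‖y‖ ≤ M → ε ≤ ‖x - y‖ →
      ‖x + y‖ ≤ 2 * max ‖x‖ ‖y‖ - δ := by
  obtain ⟨δ, hδ, hconv⟩ := exists_forall_closed_ball_dist_add_le_two_sub E (div_pos hε hM)
  refine ⟨ε * δ / 2, by positivity, fun x y hx hy hxy => ?_⟩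
  set r := max ‖x‖ ‖y‖
  have hεr : ε ≤ 2 * r := hxy.trans <| (norm_sub_le x y).trans <| by
    linarith [le_max_left ‖x‖ ‖y‖, le_max_right ‖x‖ ‖y‖]
  have hr : 0 < r := by linarith
  have hrM : r ≤ M := max_le hx hy
  have hnorm_smul : ∀ z : E, ‖r⁻¹ • z‖ = ‖z‖ / r := fun z => by
    rw [norm_smul, Real.norm_of_nonneg (inv_nonneg.2 hr.le), inv_mul_eq_div]
  have hscaled : ‖r⁻¹ • x + r⁻¹ • y‖ ≤ 2 - δ := by
    refine hconv ?_ ?_ ?_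
    · rw [hnorm_smul, div_le_one hr]; exact le_max_left _ _
    · rw [hnorm_smul, div_le_one hr]; exact le_max_right _ _
    · rw [← smul_sub, hnorm_smul]
      calc ε / M ≤ ε / r := by gcongr
        _ ≤ ‖x - y‖ / r := by gcongr
  rw [← smul_add, hnorm_smul, div_le_iff₀ hr] at hscaled
  nlinarith

/-- The paper's `φ(x, y)`. -/
def lyapunovFunctional {E : Type*} [NormedAddCommGroup E] [NormedSpace ℝ E]
    (J : E → StrongDual ℝ E) (x y : E) : ℝ :=
  ‖x‖ ^ 2 - 2 * J y x + ‖y‖ ^ 2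

section Lyapunov

variable {E : Type*} [NormedAddCommGroup E] [NormedSpace ℝ E] {J : E → StrongDual ℝ E}

theorem apply_le_norm_mul_norm {x y : E} (hJy : ‖J y‖ ≤ ‖y‖) : J y x ≤ ‖y‖ * ‖x‖ :=
  (Real.le_norm_self _).trans ((J y).le_of_opNorm_le hJy x)

theorem sq_norm_sub_norm_le_lyapunovFunctional {x y : E} (hJy : ‖J y‖ ≤ ‖y‖) :
    (‖x‖ - ‖y‖) ^ 2 ≤ lyapunovFunctional J x y := by
  have := apply_le_norm_mul_norm (x := x) hJy
  unfold lyapunovFunctional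
  nlinarith

theorem two_mul_norm_mul_triangle_defect_le_lyapunovFunctional {x y : E}
    (hJy : ‖J y‖ ≤ ‖y‖) (hJyy : J y y = ‖y‖ ^ 2) :
    2 * ‖y‖ * (‖x‖ + ‖y‖ - ‖x + y‖) ≤ lyapunovFunctional J x y := by
  have hsum : J y (x + y) ≤ ‖y‖ * ‖x + y‖ := apply_le_norm_mul_norm hJy
  rw [map_add, hJyy] at hsum
  unfold lyapunovFunctional
  nlinarith [sq_nonneg (‖x‖ - ‖y‖)]

variable [UniformConvexSpace E]

theorem exists_forall_lyapunovFunctional_lt_imp_norm_sub_lt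
    (hJ1 : ∀ x : E, J x x = ‖x‖ ^ 2) (hJ2 : ∀ x : E, ‖J x‖ = ‖x‖)
    {ε M : ℝ} (hε : 0 < ε) (hM : 0 < M) :
    ∃ η > 0, ∀ ⦃x y : E⦄, ‖x‖ ≤ M → ‖y‖ ≤ M → lyapunovFunctional J x y < η →
      ‖x - y‖ < ε := by
  obtain ⟨δ, hδ, hconv⟩ := exists_forall_norm_add_le_two_mul_max_sub (E := E) hε hM
  set t := min (ε / 4) (δ / 2)
  have ht : 0 < t := by positivity
  refine ⟨min (t ^ 2) (ε * δ / 4), by positivity, fun x y hx hy hφ => ?_⟩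
  by_contra! hxy
  have hφt : lyapunovFunctional J x y < t ^ 2 := hφ.trans_le (min_le_left _ _)
  have hφεδ : lyapunovFunctional J x y < ε * δ / 4 := hφ.trans_le (min_le_right _ _)
  have hd : |‖x‖ - ‖y‖| < t := abs_lt_of_sq_lt_sq
    ((sq_norm_sub_norm_le_lyapunovFunctional (hJ2 y).le).trans_lt hφt) ht.le
  obtain ⟨hd₁, hd₂⟩ := abs_lt.1 hd
  have htε : t ≤ ε / 4 := min_le_left _ _
  have htδ : t ≤ δ / 2 := min_le_right _ _
  have hεr : ε ≤ 2 * max ‖x‖ ‖y‖ := hxy.trans <| (norm_sub_le x y).trans <| by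
    linarith [le_max_left ‖x‖ ‖y‖, le_max_right ‖x‖ ‖y‖]
  have hadd := hconv hx hy hxy
  have hy_large : ε / 4 ≤ ‖y‖ := by
    rcases max_cases ‖x‖ ‖y‖ with ⟨h, -⟩ | ⟨h, -⟩ <;> rw [h] at hεr <;> linarith
  have hdefect : δ / 2 ≤ ‖x‖ + ‖y‖ - ‖x + y‖ := by
    rcases max_cases ‖x‖ ‖y‖ with ⟨h, -⟩ | ⟨h, -⟩ <;> rw [h] at hadd <;> linarith
  have hφ_lower :=
    two_mul_norm_mul_triangle_defect_le_lyapunovFunctional (x := x) (hJ2 y).le (hJ1 y)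
  nlinarith [mul_le_mul hy_large hdefect (by positivity) (norm_nonneg y)]

end Lyapunov

theorem stmt_15_general {E : Type*} [NormedAddCommGroup E] [NormedSpace ℝ E]
    [UniformConvexSpace E]
    (J : E → StrongDual ℝ E)
    (hJ1 : ∀ x : E, J x x = ‖x‖ ^ 2)
    (hJ2 : ∀ x : E, ‖J x‖ = ‖x‖)
    (x y : ℕ → E)
    (hbdd : Bornology.IsBounded (Set.range x) ∨ Bornology.IsBounded (Set.range y))
    (hφ : Filter.Tendsto (fun n => ‖x n‖ ^ 2 - 2 * J (y n) (x n) + ‖y n‖ ^ 2)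
      Filter.atTop (nhds 0)) :
    Filter.Tendsto (fun n => ‖x n - y n‖) Filter.atTop (nhds 0) := by
  change Tendsto (fun n => lyapunovFunctional J (x n) (y n)) atTop (nhds 0) at hφ
  obtain ⟨C, hC, hxC⟩ : ∃ C > 0, ∀ n, ‖x n‖ ≤ C ∨ ‖y n‖ ≤ C := by
    rcases hbdd with h | h <;> obtain ⟨C, hC, hC'⟩ := h.exists_pos_norm_le
    exacts [⟨C, hC, fun n => .inl (hC' _ ⟨n, rfl⟩)⟩, ⟨C, hC, fun n => .inr (hC' _ ⟨n, rfl⟩)⟩]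
  have hbounded : ∀ᶠ n in atTop, ‖x n‖ ≤ C + 1 ∧ ‖y n‖ ≤ C + 1 := by
    filter_upwards [hφ.eventually (gt_mem_nhds one_pos)] with n hn
    have hd := abs_lt.1 <| (sq_lt_one_iff_abs_lt_one _).1 <|
      (sq_norm_sub_norm_le_lyapunovFunctional (hJ2 (y n)).le).trans_lt hn
    rcases hxC n with h | h <;> constructor <;> linarith
  rw [NormedAddGroup.tendsto_nhds_zero]
  intro ε hε
  obtain ⟨η, hη, hsmall⟩ :=
    exists_forall_lyapunovFunctional_lt_imp_norm_sub_lt hJ1 hJ2 hε (by linarith : 0 < C + 1)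
  filter_upwards [hbounded, hφ.eventually (gt_mem_nhds hη)] with n ⟨hx, hy⟩ hn
  simpa only [norm_norm] using hsmall hx hy hn

/-- Kamimura–Takahashi: in a smooth uniformly convex real Banach space `E`, with
`φ (x, y) := ‖x‖² - 2 ⟨J y, x⟩ + ‖y‖²`, if `{x_n}` or `{y_n}` is bounded and
`φ (x_n, y_n) → 0`, then `‖x_n - y_n‖ → 0`. -/
theorem stmt_15 {E : Type*} [NormedAddCommGroup E] [NormedSpace ℝ E] [CompleteSpace E]
    [UniformConvexSpace E]
    (J : E → StrongDual ℝ E)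
    (hJ1 : ∀ x : E, J x x = ‖x‖ ^ 2)
    (hJ2 : ∀ x : E, ‖J x‖ = ‖x‖)
    (x y : ℕ → E)
    (hbdd : Bornology.IsBounded (Set.range x) ∨ Bornology.IsBounded (Set.range y))
    (hφ : Filter.Tendsto (fun n => ‖x n‖ ^ 2 - 2 * J (y n) (x n) + ‖y n‖ ^ 2)
      Filter.atTop (nhds 0)) :
    Filter.Tendsto (fun n => ‖x n - y n‖) Filter.atTop (nhds 0) :=
  stmt_15_general J hJ1 hJ2 x y hbdd hφ
end
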